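/- Let H be the graph constructed from G and ℓ, with target sets X and Y of size ℓ. Then there exists a reconfiguration sequence 𝒮 from X to Y in H consisting only of subsets of V ∪ X ∪ Y ∪ A ∪ B and satisfying ‖𝒮‖ = opt_H(X ⇝ Y); in particular, no target set in 𝒮 contains any internal vertex of the one-way gadgets of H. -/

import Mathlib

namespace TSS

variable {V : Type*}

/-- The set of active vertices after `i` steps of the activation process started from `S`. -/
def activeAt (G : SimpleGraph V) (τ : V → ℕ) (S : Set V) : ℕ → Set V
  | 0 => S
  | i + 1 => activeAt G τ S i ∪ { v | τ v ≤ (G.neighborSet v ∩ activeAt G τ S i).ncard }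

/-- The active vertex set `𝒜(S) = ⋃ i, 𝒜ⁱ(S)`. -/
def activeSet (G : SimpleGraph V) (τ : V → ℕ) (S : Set V) : Set V :=
  ⋃ i, activeAt G τ S i

/-- `S` is a target set for `(G, τ)` if it activates every vertex. -/
def IsTargetSet (G : SimpleGraph V) (τ : V → ℕ) (S : Set V) : Prop :=
  activeSet G τ S = Set.univ

/-- Minimum size of a target set. -/
noncomputable def optTS (G : SimpleGraph V) (τ : V → ℕ) : ℕ :=
  sInf { m | ∃ S : Set V, IsTargetSet G τ S ∧ S.ncard = m }

/-- A reconfiguration sequence `Sfam 0 = X, …, Sfam T = Y` of target sets where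
consecutive sets differ in exactly one vertex. -/
structure IsReconfSeq (G : SimpleGraph V) (τ : V → ℕ) (X Y : Set V) (T : ℕ)
    (Sfam : ℕ → Set V) : Prop where
  head : Sfam 0 = X
  last : Sfam T = Y
  target : ∀ t ≤ T, IsTargetSet G τ (Sfam t)
  step : ∀ t < T, (symmDiff (Sfam t) (Sfam (t + 1))).ncard = 1

/-- The size of a reconfiguration sequence: maximum cardinality of any member. -/
noncomputable def seqSize (T : ℕ) (Sfam : ℕ → Set V) : ℕ :=
  (Finset.range (T + 1)).sup fun t => (Sfam t).ncard

/-- `opt_G(X ⇝ Y)`: minimum size over all reconfiguration sequences from `X` to `Y`. -/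
noncomputable def optReconf (G : SimpleGraph V) (τ : V → ℕ) (X Y : Set V) : ℕ :=
  sInf { m | ∃ T Sfam, IsReconfSeq G τ X Y T Sfam ∧ seqSize T Sfam = m }

/-- The four internal vertices of a one-way gadget. -/
inductive GadVert where | t | h | b1 | b2

/-- Index set of the one-way gadgets of the graph `H` built from `G` (with degree
function `d`) and `ℓ`. -/
inductive GadIdx (V : Type*) (ℓ : ℕ) (d : V → ℕ) where
  | vx (v : V) (i : Fin ℓ)
  | xa (i : Fin ℓ) (v : V) (j : Fin (d v))
  | av (v : V) (j : Fin (d v))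
  | vy (v : V) (i : Fin ℓ)
  | yb (i : Fin ℓ) (v : V) (j : Fin (d v))
  | bv (v : V) (j : Fin (d v))

/-- Vertices of the graph `H`: a copy of `V`, the sets `X`, `Y`, `A`, `B`, and the
internal vertices of all one-way gadgets. -/
inductive HVert (V : Type*) (ℓ : ℕ) (d : V → ℕ) where
  | orig (v : V)
  | xx (i : Fin ℓ)
  | yy (i : Fin ℓ)
  | aa (v : V) (j : Fin (d v))
  | bb (v : V) (j : Fin (d v))
  | gad (D : GadIdx V ℓ d) (w : GadVert)

variable {ℓ : ℕ} {d : V → ℕ}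

/-- The tail of a one-way gadget. -/
def gadTail : GadIdx V ℓ d → HVert V ℓ d
  | .vx v _ => .orig v
  | .xa i _ _ => .xx i
  | .av v j => .aa v j
  | .vy v _ => .orig v
  | .yb i _ _ => .yy i
  | .bv v j => .bb v j

/-- The head of a one-way gadget. -/
def gadHead : GadIdx V ℓ d → HVert V ℓ d
  | .vx _ i => .xx i
  | .xa _ v j => .aa v j
  | .av v _ => .orig v
  | .vy _ i => .yy i
  | .yb _ v j => .bb v j
  | .bv v _ => .orig v

/-- Base edge relation of the graph `H`. -/
def HRel (G : SimpleGraph V) (ℓ : ℕ) (d : V → ℕ) : HVert V ℓ d → HVert V ℓ d → Prop :=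
  fun p q =>
    (∃ u v, G.Adj u v ∧ p = .orig u ∧ q = .orig v) ∨
    (∃ D, p = .gad D .t ∧ (q = .gad D .b1 ∨ q = .gad D .b2)) ∨
    (∃ D, p = .gad D .h ∧ (q = .gad D .b1 ∨ q = .gad D .b2)) ∨
    (∃ D, p = gadTail D ∧ q = .gad D .t) ∨
    (∃ D, p = gadHead D ∧ q = .gad D .h)

/-- The graph `H` constructed from `G` (with degree function `d`) and `ℓ`. -/
def graphH (G : SimpleGraph V) (ℓ : ℕ) (d : V → ℕ) : SimpleGraph (HVert V ℓ d) :=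
  SimpleGraph.fromRel (HRel G ℓ d)

/-- The threshold function `τ'` of `H`, where `n` is the number of vertices of `G`. -/
def tauH (τ : V → ℕ) (n ℓ : ℕ) (d : V → ℕ) : HVert V ℓ d → ℕ
  | .orig v => τ v
  | .xx _ => n
  | .yy _ => n
  | .aa _ _ => ℓ
  | .bb _ _ => ℓ
  | .gad _ .t => 1
  | .gad _ .b1 => 1
  | .gad _ .b2 => 1
  | .gad _ .h => 2

/-- The vertex set `X = {x₁, …, x_ℓ}` of `H`. -/
def XSet (V : Type*) (ℓ : ℕ) (d : V → ℕ) : Set (HVert V ℓ d) := Set.range HVert.xx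

/-- The vertex set `Y = {y₁, …, y_ℓ}` of `H`. -/
def YSet (V : Type*) (ℓ : ℕ) (d : V → ℕ) : Set (HVert V ℓ d) := Set.range HVert.yy

/-- The copy of `V` inside `V(H)`. -/
def OrigSet (V : Type*) (ℓ : ℕ) (d : V → ℕ) : Set (HVert V ℓ d) := Set.range HVert.orig

/-- The vertex set `A = {a_{v,j}}` of `H`. -/
def ASet (V : Type*) (ℓ : ℕ) (d : V → ℕ) : Set (HVert V ℓ d) :=
  { p | ∃ v j, p = HVert.aa v j }

/-- The vertex set `B = {b_{v,j}}` of `H`. -/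
def BSet (V : Type*) (ℓ : ℕ) (d : V → ℕ) : Set (HVert V ℓ d) :=
  { p | ∃ v j, p = HVert.bb v j }

end TSS

/-!
Replacing every internal vertex of a one-way gadget by the tail of its gadget maps target sets
of `H` to target sets: an active tail activates its whole gadget, so the image activates every
vertex of the original set, hence everything. This retraction fixes `X` and `Y`, does not increase
cardinalities, and moves consecutive members of a reconfiguration sequence at most one vertex
apart. Applying it to an optimal sequence from `X` to `Y` and deleting repetitions gives an
optimal sequence that avoids all gadget interiors.
-/

namespace TSS

section Activation

variable {W : Type*} {G : SimpleGraph W} {τ : W → ℕ} {S S' : Set W}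

lemma monotone_activeAt : Monotone (activeAt G τ S) :=
  monotone_nat_of_le_succ fun _ => Set.subset_union_left

lemma subset_activeSet : S ⊆ activeSet G τ S :=
  Set.subset_iUnion (activeAt G τ S) 0

variable [Finite W]

lemma mem_activeSet_of_le_ncard {v : W}
    (h : τ v ≤ (G.neighborSet v ∩ activeSet G τ S).ncard) : v ∈ activeSet G τ S := by
  set N := G.neighborSet v ∩ activeSet G τ S
  obtain ⟨i, hi⟩ := monotone_activeAt.directed_le.exists_mem_subset_of_finset_subset_biUnion
    (s := (Set.toFinite N).toFinset) (by rw [Set.Finite.coe_toFinset]; exact Set.inter_subset_right)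
  refine Set.mem_iUnion.2 ⟨i + 1, Or.inr (h.trans (Set.ncard_le_ncard fun x hx => ⟨hx.1, ?_⟩))⟩
  exact hi (by simpa using hx)

lemma mem_activeSet_of_injective {α : Type*} [Finite α] {v : W} (f : α → W)
    (hf : f.Injective) (hadj : ∀ a, G.Adj v (f a)) (hact : ∀ a, f a ∈ activeSet G τ S)
    (hτ : τ v ≤ Nat.card α) : v ∈ activeSet G τ S := by
  refine mem_activeSet_of_le_ncard (hτ.trans ?_)
  rw [← Set.ncard_range_of_injective hf]
  exact Set.ncard_le_ncard (Set.range_subset_iff.2 fun a => ⟨hadj a, hact a⟩)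

lemma mem_activeSet_of_adj {u v : W} (hadj : G.Adj v u) (hu : u ∈ activeSet G τ S)
    (hτ : τ v ≤ 1) : v ∈ activeSet G τ S :=
  mem_activeSet_of_injective (α := Unit) (fun _ => u) (fun _ _ _ => rfl) (fun _ => hadj)
    (fun _ => hu) (by simpa using hτ)

lemma activeSet_subset_of_subset_activeSet (h : S ⊆ activeSet G τ S') :
    activeSet G τ S ⊆ activeSet G τ S' := by
  refine Set.iUnion_subset fun i => ?_
  induction i with
  | zero => exact h
  | succ i ih =>
    rintro v (hv | hv)
    · exact ih hv
    · exact mem_activeSet_of_le_ncard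
        (hv.trans (Set.ncard_le_ncard (Set.inter_subset_inter_right _ ih)))

lemma IsTargetSet.of_subset_activeSet (hS : IsTargetSet G τ S)
    (h : S ⊆ activeSet G τ S') : IsTargetSet G τ S' :=
  Set.eq_univ_of_univ_subset (hS ▸ activeSet_subset_of_subset_activeSet h)

end Activation

section Reconfiguration

variable {W : Type*} {G : SimpleGraph W} {τ : W → ℕ} {X Y : Set W}

lemma optReconf_le_seqSize {T : ℕ} {F : ℕ → Set W} (hF : IsReconfSeq G τ X Y T F) :
    optReconf G τ X Y ≤ seqSize T F :=
  Nat.sInf_le ⟨T, F, hF, rfl⟩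

lemma exists_seqSize_eq_optReconf (h : ∃ T F, IsReconfSeq G τ X Y T F) :
    ∃ T F, IsReconfSeq G τ X Y T F ∧ seqSize T F = optReconf G τ X Y := by
  obtain ⟨T, F, hF⟩ := h
  have hne : {m | ∃ T F, IsReconfSeq G τ X Y T F ∧ seqSize T F = m}.Nonempty := ⟨_, T, F, hF, rfl⟩
  exact Nat.sInf_mem hne

lemma ncard_symmDiff_image_le_one {W' : Type*} (f : W → W') {S S' : Set W}
    (h : (symmDiff S S').ncard = 1) : (symmDiff (f '' S) (f '' S')).ncard ≤ 1 := by
  obtain ⟨a, ha⟩ := Set.ncard_eq_one.1 h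
  calc (symmDiff (f '' S) (f '' S')).ncard ≤ ({f a} : Set W').ncard := by
        refine Set.ncard_le_ncard ?_
        rw [← Set.image_singleton, ← ha]
        rintro _ (⟨⟨u, hu, rfl⟩, hu'⟩ | ⟨⟨u, hu, rfl⟩, hu'⟩)
        · exact ⟨u, Or.inl ⟨hu, fun h => hu' ⟨u, h, rfl⟩⟩, rfl⟩
        · exact ⟨u, Or.inr ⟨hu, fun h => hu' ⟨u, h, rfl⟩⟩, rfl⟩
    _ = 1 := Set.ncard_singleton _

variable [Finite W]

lemma exists_dedup_of_ncard_symmDiff_le_one (T : ℕ) (F : ℕ → Set W)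
    (hF : ∀ t < T, (symmDiff (F t) (F (t + 1))).ncard ≤ 1) :
    ∃ (T' : ℕ) (F' : ℕ → Set W), F' 0 = F 0 ∧ F' T' = F T ∧ (∀ t ≤ T', ∃ s ≤ T, F' t = F s) ∧
      ∀ t < T', (symmDiff (F' t) (F' (t + 1))).ncard = 1 := by
  induction T generalizing F with
  | zero =>
    exact ⟨0, F, rfl, rfl, fun t ht => ⟨t, ht, rfl⟩, fun t ht => absurd ht (Nat.not_lt_zero t)⟩
  | succ T ih =>
    obtain ⟨T', F', h0, hT, hmem, hstep⟩ :=
      ih (fun t => F (t + 1)) fun t ht => hF (t + 1) (by omega)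
    by_cases heq : F 0 = F 1
    · exact ⟨T', F', h0.trans heq.symm, hT,
        fun t ht => (hmem t ht).elim fun s hs => ⟨s + 1, by omega, hs.2⟩, hstep⟩
    refine ⟨T' + 1, (fun | 0 => F 0 | t + 1 => F' t : ℕ → Set W), rfl, hT, ?_, ?_⟩
    · rintro (_ | t) ht
      · exact ⟨0, by omega, rfl⟩
      · obtain ⟨s, hs, hFs⟩ := hmem t (by omega)
        exact ⟨s + 1, by omega, hFs⟩
    · rintro (_ | t) ht
      · have hne : (symmDiff (F 0) (F 1)).ncard ≠ 0 := by
          rw [Ne, Set.ncard_eq_zero, ← Set.bot_eq_empty, symmDiff_eq_bot]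
          exact heq
        have hle : (symmDiff (F 0) (F 1)).ncard ≤ 1 := hF 0 (by omega)
        change (symmDiff (F 0) (F' 0)).ncard = 1
        rw [h0, zero_add]
        omega
      · exact hstep t (by omega)

lemma IsReconfSeq.exists_image {T : ℕ} {F : ℕ → Set W}
    (hF : IsReconfSeq G τ X Y T F) (f : W → W) (hX : f '' X = X) (hY : f '' Y = Y)
    (htarget : ∀ S, IsTargetSet G τ S → IsTargetSet G τ (f '' S)) :
    ∃ T' F', IsReconfSeq G τ X Y T' F' ∧ (∀ t ≤ T', F' t ⊆ Set.range f) ∧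
      seqSize T' F' ≤ seqSize T F := by
  obtain ⟨T', F', h0, hT, hmem, hstep⟩ := exists_dedup_of_ncard_symmDiff_le_one T (f '' F ·)
    fun t ht => ncard_symmDiff_image_le_one f (hF.step t ht)
  refine ⟨T', F', ⟨by rw [h0, hF.head, hX], by rw [hT, hF.last, hY], ?_, hstep⟩, ?_, ?_⟩
  · intro t ht
    obtain ⟨s, hs, hFs⟩ := hmem t ht
    exact hFs ▸ htarget _ (hF.target s hs)
  · intro t ht
    obtain ⟨s, -, hFs⟩ := hmem t ht
    exact hFs ▸ Set.image_subset_range f _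
  · refine Finset.sup_le fun t ht => ?_
    obtain ⟨s, hs, hFs⟩ := hmem t (Nat.lt_succ_iff.1 (Finset.mem_range.1 ht))
    calc (F' t).ncard ≤ (F s).ncard := hFs ▸ Set.ncard_image_le (Set.toFinite _)
      _ ≤ seqSize T F :=
        Finset.le_sup (f := fun t => (F t).ncard) (Finset.mem_range.2 (Nat.lt_succ_of_le hs))

end Reconfiguration

section GraphH

variable {V : Type*} {ℓ : ℕ} {d : V → ℕ}

instance : Finite GadVert :=
  Finite.of_surjective (fun i : Fin 4 => [GadVert.t, .h, .b1, .b2][i])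
    (by rintro (_ | _ | _ | _); exacts [⟨0, rfl⟩, ⟨1, rfl⟩, ⟨2, rfl⟩, ⟨3, rfl⟩])

private def GadIdx.encode : GadIdx V ℓ d →
    (V × Fin ℓ) ⊕ (Fin ℓ × Σ v, Fin (d v)) ⊕ (Σ v, Fin (d v)) ⊕
    (V × Fin ℓ) ⊕ (Fin ℓ × Σ v, Fin (d v)) ⊕ (Σ v, Fin (d v))
  | .vx v i => .inl (v, i)
  | .xa i v j => .inr (.inl (i, ⟨v, j⟩))
  | .av v j => .inr (.inr (.inl ⟨v, j⟩))
  | .vy v i => .inr (.inr (.inr (.inl (v, i))))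
  | .yb i v j => .inr (.inr (.inr (.inr (.inl (i, ⟨v, j⟩)))))
  | .bv v j => .inr (.inr (.inr (.inr (.inr ⟨v, j⟩))))

instance [Finite V] : Finite (GadIdx V ℓ d) :=
  Finite.of_injective GadIdx.encode fun a b h => by
    cases a <;> cases b <;> simp_all [GadIdx.encode]

private def HVert.encode : HVert V ℓ d →
    V ⊕ Fin ℓ ⊕ Fin ℓ ⊕ (Σ v, Fin (d v)) ⊕ (Σ v, Fin (d v)) ⊕ (GadIdx V ℓ d × GadVert)
  | .orig v => .inl v
  | .xx i => .inr (.inl i)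
  | .yy i => .inr (.inr (.inl i))
  | .aa v j => .inr (.inr (.inr (.inl ⟨v, j⟩)))
  | .bb v j => .inr (.inr (.inr (.inr (.inl ⟨v, j⟩))))
  | .gad D w => .inr (.inr (.inr (.inr (.inr (D, w)))))

instance [Finite V] : Finite (HVert V ℓ d) :=
  Finite.of_injective HVert.encode fun a b h => by
    cases a <;> cases b <;> simp_all [HVert.encode]

section Adjacency

variable (G : SimpleGraph V) (D : GadIdx V ℓ d)

lemma graphH_adj_gad_t_tail : (graphH G ℓ d).Adj (.gad D .t) (gadTail D) := by
  cases D <;> simp [graphH, HRel, gadTail]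

lemma graphH_adj_gad_h_head : (graphH G ℓ d).Adj (.gad D .h) (gadHead D) := by
  cases D <;> simp [graphH, HRel, gadHead]

lemma graphH_adj_gad_b1_t : (graphH G ℓ d).Adj (.gad D .b1) (.gad D .t) := by
  simp [graphH, HRel]

lemma graphH_adj_gad_b2_t : (graphH G ℓ d).Adj (.gad D .b2) (.gad D .t) := by
  simp [graphH, HRel]

lemma graphH_adj_gad_h_b1 : (graphH G ℓ d).Adj (.gad D .h) (.gad D .b1) := by
  simp [graphH, HRel]

lemma graphH_adj_gad_h_b2 : (graphH G ℓ d).Adj (.gad D .h) (.gad D .b2) := by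
  simp [graphH, HRel]

end Adjacency

variable [Finite V] (G : SimpleGraph V) (τ : V → ℕ) (n : ℕ) {Q : Set (HVert V ℓ d)}

lemma gad_mem_activeSet {D : GadIdx V ℓ d}
    (hD : gadTail D ∈ activeSet (graphH G ℓ d) (tauH τ n ℓ d) Q) (w : GadVert) :
    HVert.gad D w ∈ activeSet (graphH G ℓ d) (tauH τ n ℓ d) Q := by
  have ht := mem_activeSet_of_adj (graphH_adj_gad_t_tail G D) hD le_rfl
  have hb1 := mem_activeSet_of_adj (graphH_adj_gad_b1_t G D) ht le_rfl
  have hb2 := mem_activeSet_of_adj (graphH_adj_gad_b2_t G D) ht le_rfl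
  cases w
  · exact ht
  · have hb12 : HVert.gad D .b1 ≠ .gad D .b2 := by simp
    refine mem_activeSet_of_le_ncard ((Set.ncard_pair hb12).ge.trans
      (Set.ncard_le_ncard (Set.pair_subset ?_ ?_)))
    exacts [⟨graphH_adj_gad_h_b1 G D, hb1⟩, ⟨graphH_adj_gad_h_b2 G D, hb2⟩]
  · exact hb1
  · exact hb2

lemma mem_activeSet_of_gadHead {α : Type*} [Finite α] {u : HVert V ℓ d} (D : α → GadIdx V ℓ d)
    (hD : D.Injective) (hhead : ∀ a, gadHead (D a) = u)
    (htail : ∀ a, gadTail (D a) ∈ activeSet (graphH G ℓ d) (tauH τ n ℓ d) Q)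
    (hτ : tauH τ n ℓ d u ≤ Nat.card α) : u ∈ activeSet (graphH G ℓ d) (tauH τ n ℓ d) Q :=
  mem_activeSet_of_injective (fun a => .gad (D a) .h) (fun _ _ h => hD (HVert.gad.inj h).1)
    (fun a => hhead a ▸ (graphH_adj_gad_h_head G (D a)).symm)
    (fun a => gad_mem_activeSet G τ n (htail a) .h) hτ

lemma isTargetSet_of_forall_orig_mem (hn : n ≤ Nat.card V)
    (horig : ∀ v, HVert.orig v ∈ activeSet (graphH G ℓ d) (tauH τ n ℓ d) Q) :
    IsTargetSet (graphH G ℓ d) (tauH τ n ℓ d) Q := by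
  set A := activeSet (graphH G ℓ d) (tauH τ n ℓ d) Q
  have hx (i : Fin ℓ) : HVert.xx i ∈ A := mem_activeSet_of_gadHead G τ n (fun v => .vx v i)
    (fun _ _ h => (GadIdx.vx.inj h).1) (fun _ => rfl) horig hn
  have hy (i : Fin ℓ) : HVert.yy i ∈ A := mem_activeSet_of_gadHead G τ n (fun v => .vy v i)
    (fun _ _ h => (GadIdx.vy.inj h).1) (fun _ => rfl) horig hn
  have ha (v : V) (j : Fin (d v)) : HVert.aa v j ∈ A := mem_activeSet_of_gadHead G τ n
    (fun i => .xa i v j) (fun _ _ h => (GadIdx.xa.inj h).1) (fun _ => rfl) hx (by simp [tauH])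
  have hb (v : V) (j : Fin (d v)) : HVert.bb v j ∈ A := mem_activeSet_of_gadHead G τ n
    (fun i => .yb i v j) (fun _ _ h => (GadIdx.yb.inj h).1) (fun _ => rfl) hy (by simp [tauH])
  have htail (D : GadIdx V ℓ d) : gadTail D ∈ A := by
    cases D
    exacts [horig _, hx _, ha _ _, horig _, hy _, hb _ _]
  refine Set.eq_univ_of_forall fun u => ?_
  cases u
  exacts [horig _, hx _, hy _, ha _ _, hb _ _, gad_mem_activeSet G τ n (htail _) _]

lemma isTargetSet_of_XSet_subset (hn : n ≤ Nat.card V) (hτd : ∀ v, τ v ≤ d v)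
    (hX : XSet V ℓ d ⊆ Q) : IsTargetSet (graphH G ℓ d) (tauH τ n ℓ d) Q := by
  refine isTargetSet_of_forall_orig_mem G τ n hn fun v => ?_
  refine mem_activeSet_of_gadHead G τ n (fun j => .av v j)
    (fun _ _ h => eq_of_heq (GadIdx.av.inj h).2) (fun _ => rfl) (fun j => ?_)
    (by simpa [tauH] using hτd v)
  exact mem_activeSet_of_gadHead G τ n (fun i => .xa i v j) (fun _ _ h => (GadIdx.xa.inj h).1)
    (fun _ => rfl) (fun i => subset_activeSet (hX ⟨i, rfl⟩)) (by simp [tauH, gadTail])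

lemma isTargetSet_of_YSet_subset (hn : n ≤ Nat.card V) (hτd : ∀ v, τ v ≤ d v)
    (hY : YSet V ℓ d ⊆ Q) : IsTargetSet (graphH G ℓ d) (tauH τ n ℓ d) Q := by
  refine isTargetSet_of_forall_orig_mem G τ n hn fun v => ?_
  refine mem_activeSet_of_gadHead G τ n (fun j => .bv v j)
    (fun _ _ h => eq_of_heq (GadIdx.bv.inj h).2) (fun _ => rfl) (fun j => ?_)
    (by simpa [tauH] using hτd v)
  exact mem_activeSet_of_gadHead G τ n (fun i => .yb i v j) (fun _ _ h => (GadIdx.yb.inj h).1)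
    (fun _ => rfl) (fun i => subset_activeSet (hY ⟨i, rfl⟩)) (by simp [tauH, gadTail])

end GraphH

section Retraction

variable {V : Type*} {ℓ : ℕ} {d : V → ℕ}

def gadgetRetract : HVert V ℓ d → HVert V ℓ d
  | .gad D _ => gadTail D
  | u => u

lemma gadgetRetract_image_XSet : gadgetRetract '' XSet V ℓ d = XSet V ℓ d := by
  rw [XSet, ← Set.range_comp]
  rfl

lemma gadgetRetract_image_YSet : gadgetRetract '' YSet V ℓ d = YSet V ℓ d := by
  rw [YSet, ← Set.range_comp]
  rfl

lemma range_gadgetRetract_subset :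
    Set.range (gadgetRetract (V := V) (ℓ := ℓ) (d := d)) ⊆
      OrigSet V ℓ d ∪ XSet V ℓ d ∪ YSet V ℓ d ∪ ASet V ℓ d ∪ BSet V ℓ d := by
  rintro _ ⟨(_ | _ | _ | _ | _ | ⟨(_ | _ | _ | _ | _ | _), _⟩), rfl⟩ <;>
    simp [gadgetRetract, gadTail, OrigSet, XSet, YSet, ASet, BSet]

lemma IsTargetSet.image_gadgetRetract [Finite V] {G : SimpleGraph V} {τ : V → ℕ} {n : ℕ}
    {S : Set (HVert V ℓ d)} (hS : IsTargetSet (graphH G ℓ d) (tauH τ n ℓ d) S) :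
    IsTargetSet (graphH G ℓ d) (tauH τ n ℓ d) (gadgetRetract '' S) :=
  hS.of_subset_activeSet fun u hu => by
    cases u with
    | gad D w =>
      exact gad_mem_activeSet G τ n (subset_activeSet (Set.mem_image_of_mem gadgetRetract hu)) w
    | _ => exact subset_activeSet ⟨_, hu, rfl⟩

end Retraction

section XYPath

-- add `y₀, …, y_{ℓ-1}` one at a time, then delete `x₀, …, x_{ℓ-1}` one at a time
def xyPath (V : Type*) (ℓ : ℕ) (d : V → ℕ) (t : ℕ) : Set (HVert V ℓ d) :=
  {p | match p with
    | .xx i => t ≤ ℓ + i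
    | .yy i => i < t
    | _ => False}

lemma ncard_symmDiff_xyPath {V : Type*} {ℓ : ℕ} {d : V → ℕ} {t : ℕ} (ht : t < 2 * ℓ) :
    (symmDiff (xyPath V ℓ d t) (xyPath V ℓ d (t + 1))).ncard = 1 := by
  rw [Set.ncard_eq_one]
  rcases lt_or_ge t ℓ with h | h
  · refine ⟨.yy ⟨t, h⟩, ?_⟩
    ext (_ | i | i | _ | _ | _) <;> simp [xyPath, Set.mem_symmDiff, Fin.ext_iff] <;> omega
  · refine ⟨.xx ⟨t - ℓ, by omega⟩, ?_⟩
    ext (_ | i | i | _ | _ | _) <;> simp [xyPath, Set.mem_symmDiff, Fin.ext_iff] <;> omega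

lemma isReconfSeq_xyPath {V : Type*} [Finite V] (G : SimpleGraph V) (τ : V → ℕ) {n ℓ : ℕ}
    {d : V → ℕ} (hn : n ≤ Nat.card V) (hτd : ∀ v, τ v ≤ d v) :
    IsReconfSeq (graphH G ℓ d) (tauH τ n ℓ d) (XSet V ℓ d) (YSet V ℓ d) (2 * ℓ)
      (xyPath V ℓ d) where
  head := by
    ext (_ | i | i | _ | _ | _) <;> simp [xyPath, XSet]
  last := by
    ext (_ | i | i | _ | _ | _) <;> simp [xyPath, YSet]
    all_goals have := i.isLt; omega
  target t _ := by
    rcases le_total t ℓ with h | h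
    · refine isTargetSet_of_XSet_subset G τ n hn hτd ?_
      rintro _ ⟨i, rfl⟩
      show t ≤ ℓ + i
      omega
    · refine isTargetSet_of_YSet_subset G τ n hn hτd ?_
      rintro _ ⟨i, rfl⟩
      show (i : ℕ) < t
      omega
  step _ ht := ncard_symmDiff_xyPath ht

end XYPath

end TSS

open TSS in
theorem stmt8_general {V : Type*} [Fintype V] (G : SimpleGraph V) [DecidableRel G.Adj] (τ : V → ℕ)
    (ℓ : ℕ) (hτ : ∀ v : V, τ v ≤ G.degree v) :
    ∃ T Sfam,
      IsReconfSeq (graphH G ℓ (fun v => G.degree v)) (tauH τ (Fintype.card V) ℓ (fun v => G.degree v))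
        (XSet V ℓ (fun v => G.degree v)) (YSet V ℓ (fun v => G.degree v)) T Sfam ∧
      (∀ t ≤ T, Sfam t ⊆
        OrigSet V ℓ (fun v => G.degree v) ∪ XSet V ℓ (fun v => G.degree v) ∪ YSet V ℓ (fun v => G.degree v) ∪
          ASet V ℓ (fun v => G.degree v) ∪ BSet V ℓ (fun v => G.degree v)) ∧
      (∀ t ≤ T, ∀ (D : GadIdx V ℓ (fun v => G.degree v)) (w : GadVert), HVert.gad D w ∉ Sfam t) ∧
      seqSize T Sfam = optReconf (graphH G ℓ (fun v => G.degree v)) (tauH τ (Fintype.card V) ℓ (fun v => G.degree v))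
        (XSet V ℓ (fun v => G.degree v)) (YSet V ℓ (fun v => G.degree v)) := by
  obtain ⟨T, F, hF, hopt⟩ := exists_seqSize_eq_optReconf
    ⟨_, _, isReconfSeq_xyPath (ℓ := ℓ) G τ Nat.card_eq_fintype_card.ge hτ⟩
  obtain ⟨T', F', hF', hrange, hsize⟩ := hF.exists_image gadgetRetract gadgetRetract_image_XSet
    gadgetRetract_image_YSet fun _ hS => hS.image_gadgetRetract
  have hsub (t : ℕ) (ht : t ≤ T') := (hrange t ht).trans range_gadgetRetract_subset
  refine ⟨T', F', hF', hsub, fun t ht D w hmem => ?_,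
    le_antisymm (hsize.trans hopt.le) (optReconf_le_seqSize hF')⟩
  simpa [OrigSet, XSet, YSet, ASet, BSet] using hsub t ht hmem

open TSS in
/-- There is an optimal reconfiguration sequence from `X` to `Y` in `H` consisting only of
subsets of `V ∪ X ∪ Y ∪ A ∪ B`; in particular, none of its target sets contains any internal
vertex of the one-way gadgets of `H`. -/
theorem stmt8 {V : Type*} [Fintype V] (G : SimpleGraph V) [DecidableRel G.Adj] (τ : V → ℕ)
    (ℓ : ℕ) (hℓ : 1 ≤ ℓ) (hiso : ∀ v : V, 0 < G.degree v) (hτ : ∀ v : V, τ v ≤ G.degree v) :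
    ∃ T Sfam,
      IsReconfSeq (graphH G ℓ (fun v => G.degree v)) (tauH τ (Fintype.card V) ℓ (fun v => G.degree v))
        (XSet V ℓ (fun v => G.degree v)) (YSet V ℓ (fun v => G.degree v)) T Sfam ∧
      (∀ t ≤ T, Sfam t ⊆
        OrigSet V ℓ (fun v => G.degree v) ∪ XSet V ℓ (fun v => G.degree v) ∪ YSet V ℓ (fun v => G.degree v) ∪
          ASet V ℓ (fun v => G.degree v) ∪ BSet V ℓ (fun v => G.degree v)) ∧
      (∀ t ≤ T, ∀ (D : GadIdx V ℓ (fun v => G.degree v)) (w : GadVert), HVert.gad D w ∉ Sfam t) ∧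
      seqSize T Sfam = optReconf (graphH G ℓ (fun v => G.degree v)) (tauH τ (Fintype.card V) ℓ (fun v => G.degree v))
        (XSet V ℓ (fun v => G.degree v)) (YSet V ℓ (fun v => G.degree v)) :=
  stmt8_general G τ ℓ hτ
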